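/- The degree function gr : M → ℕ is strictly increasing: if α < β in M then gr(α) < gr(β). -/
import Mathlib


open Function

/-- The set `S = (ℕ × ℕ) × {1,…,n}`, a disjoint union of `n` quadrants. -/
abbrev QSet (n : ℕ) := (ℕ × ℕ) × Fin n

/-- The translation of `S` with parameters `m : Fin n → ℕ`, shifting the `i`-th quadrant
diagonally by `m i`. -/
def translMap {n : ℕ} (m : Fin n → ℕ) : QSet n → QSet n :=
  fun p => ((p.1.1 + m p.2, p.1.2 + m p.2), p.2)

/-- The generator `tᵢ` of the translation monoid `T`: diagonal shift by `1` on quadrant `Qᵢ`,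
identity elsewhere. -/
def tgen {n : ℕ} (i : Fin n) : QSet n → QSet n :=
  translMap (fun j => if j = i then 1 else 0)

/-- The defining conditions of the monoid `M`: `g` is injective, eventually a diagonal
translation on each quadrant (B₁), and maps each vertical (resp. horizontal) half-line
order-preservingly onto a shifted vertical (resp. horizontal) half-line (B₂(a), B₂(b)). -/
def MCond {n : ℕ} (g : QSet n → QSet n) : Prop :=
  Function.Injective g ∧
  ∃ (x₀ y₀ : ℕ) (m : Fin n → ℤ),
    (∀ (x y : ℕ) (i : Fin n), x₀ ≤ x → y₀ ≤ y →
      (g ((x, y), i)).2 = i ∧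
      ((g ((x, y), i)).1.1 : ℤ) = (x : ℤ) + m i ∧
      ((g ((x, y), i)).1.2 : ℤ) = (y : ℤ) + m i) ∧
    (∀ (x : ℕ) (i : Fin n), ∃ (q : ℤ) (x' : ℕ) (i' : Fin n),
      ∀ y : ℕ, y₀ ≤ y →
        (g ((x, y), i)).1.1 = x' ∧ (g ((x, y), i)).2 = i' ∧
        ((g ((x, y), i)).1.2 : ℤ) = (y : ℤ) + q) ∧
    (∀ (y : ℕ) (i : Fin n), ∃ (r : ℤ) (y' : ℕ) (i' : Fin n),
      ∀ x : ℕ, x₀ ≤ x →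
        (g ((x, y), i)).1.2 = y' ∧ (g ((x, y), i)).2 = i' ∧
        ((g ((x, y), i)).1.1 : ℤ) = (x : ℤ) + r)

/-- The monoid `M` of injective self-maps of `S` satisfying B₁ and B₂. -/
def MMon (n : ℕ) := {g : QSet n → QSet n // MCond g}

/-- The order on `M`: `α ≤ β` iff `β = t α` for some translation `t ∈ T`
(maps act on the right, so `t α` means "first `t`, then `α`"). -/
def Mle {n : ℕ} (α β : MMon n) : Prop :=
  ∃ m : Fin n → ℕ, ∀ s, α.1 (translMap m s) = β.1 s

/-- The strict order on `M`. -/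
def Mlt {n : ℕ} (α β : MMon n) : Prop := Mle α β ∧ α ≠ β

/-- The degree `gr(α)`: the number of vertical half-lines occurring in the canonical
decomposition of `S - Sα`, i.e. the number of `(x,i)` such that the vertical half-line over
`(x,i)` eventually avoids the image of `α`. -/
noncomputable def gr {n : ℕ} (α : QSet n → QSet n) : ℕ :=
  Nat.card {p : ℕ × Fin n // ∃ N : ℕ, ∀ y : ℕ, N ≤ y → ((p.1, y), p.2) ∉ Set.range α}

/-- The set of half-lines counted by `gr`. -/
def Aset {n : ℕ} (g : QSet n → QSet n) : Set (ℕ × Fin n) :=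
  {p | ∃ N : ℕ, ∀ y : ℕ, N ≤ y → ((p.1, y), p.2) ∉ Set.range g}

lemma gr_eq_ncard {n : ℕ} (g : QSet n → QSet n) : gr g = (Aset g).ncard := rfl

lemma Aset_finite {n : ℕ} {g : QSet n → QSet n} (hg : MCond g) : (Aset g).Finite := by
  obtain ⟨hinj, x₀, y₀, m, hB1, -, -⟩ := hg
  set B : ℕ := x₀ + (Finset.univ.sup fun i => (m i).natAbs) + 1 with hB
  apply Set.Finite.subset ((Set.finite_Iio B).prod Set.finite_univ)
  rintro ⟨X, i⟩ ⟨N, hN⟩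
  refine ⟨?_, trivial⟩
  simp only [Set.mem_Iio]
  by_contra hx
  push_neg at hx
  have hsup : (m i).natAbs ≤ Finset.univ.sup fun i => (m i).natAbs :=
    Finset.le_sup (f := fun i => (m i).natAbs) (Finset.mem_univ i)
  have hna1 : m i ≤ ((m i).natAbs : ℤ) := Int.le_natAbs
  have hna2 : -(((m i).natAbs : ℤ)) ≤ m i := by omega
  have hX : (x₀ : ℤ) + m i ≤ (X : ℤ) := by
    have : (B : ℤ) ≤ (X : ℤ) := by exact_mod_cast hx
    push_cast [hB] at this
    omega
  set x : ℕ := ((X : ℤ) - m i).toNat with hxdef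
  have hx1 : (x : ℤ) = (X : ℤ) - m i := Int.toNat_of_nonneg (by omega)
  have hxx : x₀ ≤ x := by omega
  set y : ℕ := y₀ + N + (m i).natAbs with hydef
  obtain ⟨h2, h1x, h1y⟩ := hB1 x y i hxx (by omega)
  set Y := (g ((x, y), i)).1.2 with hYdef
  have hYN : N ≤ Y := by
    have hyz : (y : ℤ) = (y₀ : ℤ) + N + (m i).natAbs := by push_cast [hydef]; ring
    omega
  apply hN Y hYN
  refine ⟨((x, y), i), ?_⟩
  have hxc : (g ((x, y), i)).1.1 = X := by
    have : ((g ((x, y), i)).1.1 : ℤ) = (X : ℤ) := by rw [h1x]; omega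
    exact_mod_cast this
  exact Prod.ext (Prod.ext hxc rfl) h2

/-- The degree function `gr : M → ℕ` is strictly increasing:
`α < β` implies `gr(α) < gr(β)`. -/
theorem stmt_9 (n : ℕ) (α β : MMon n) (h : Mlt α β) :
    gr α.1 < gr β.1 := by
  obtain ⟨⟨m, hm⟩, hne⟩ := h
  have hrange : Set.range β.1 ⊆ Set.range α.1 := by
    rintro _ ⟨s, rfl⟩; exact ⟨translMap m s, hm s⟩
  have hsub : Aset α.1 ⊆ Aset β.1 := by
    rintro p ⟨N, hN⟩
    exact ⟨N, fun y hy hmem => hN y hy (hrange hmem)⟩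
  have hiex : ∃ i, 0 < m i := by
    by_contra h'
    push_neg at h'
    apply hne
    apply Subtype.ext
    funext s
    rw [← hm s]
    have hms : m s.2 = 0 := Nat.le_zero.mp (h' s.2)
    simp [translMap, hms]
  obtain ⟨i, hi⟩ := hiex
  obtain ⟨hinj, x₀, y₀, mα, hB1, hB2a, hB2b⟩ := α.2
  obtain ⟨q, x', i', hline⟩ := hB2a 0 i
  have hna1 : q ≤ (q.natAbs : ℤ) := Int.le_natAbs
  have hna2 : -((q.natAbs : ℤ)) ≤ q := by omega
  have hnotA : (x', i') ∉ Aset α.1 := by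
    rintro ⟨N, hN⟩
    set y : ℕ := y₀ + N + q.natAbs with hydef
    obtain ⟨h1, h2, h3⟩ := hline y (by omega)
    set Y := (α.1 ((0, y), i)).1.2 with hYdef
    have hYN : N ≤ Y := by
      have hyz : (y : ℤ) = (y₀ : ℤ) + N + q.natAbs := by push_cast [hydef]; ring
      omega
    apply hN Y hYN
    exact ⟨((0, y), i), Prod.ext (Prod.ext h1 rfl) h2⟩
  have hinA : (x', i') ∈ Aset β.1 := by
    refine ⟨y₀ + q.natAbs, fun Y hY hmem => ?_⟩
    obtain ⟨s, hs⟩ := hmem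
    set y : ℕ := ((Y : ℤ) - q).toNat with hydef
    have hy0 : (y : ℤ) = (Y : ℤ) - q := by
      apply Int.toNat_of_nonneg
      have : (y₀ : ℤ) + q.natAbs ≤ (Y : ℤ) := by exact_mod_cast hY
      omega
    have hyge : y₀ ≤ y := by
      have : (y₀ : ℤ) + q.natAbs ≤ (Y : ℤ) := by exact_mod_cast hY
      omega
    obtain ⟨h1, h2, h3⟩ := hline y hyge
    have hval : α.1 ((0, y), i) = ((x', Y), i') := by
      refine Prod.ext (Prod.ext h1 ?_) h2
      have : ((α.1 ((0, y), i)).1.2 : ℤ) = (Y : ℤ) := by rw [h3]; omega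
      exact_mod_cast this
    have heq : α.1 (translMap m s) = α.1 ((0, y), i) := by
      rw [hm s, hs, ← hval]
    have := hinj heq
    have hs2 : s.2 = i := by
      have := congrArg Prod.snd this
      simpa [translMap] using this
    have hx0 : s.1.1 + m s.2 = 0 := by
      have := congrArg (fun p => p.1.1) this
      simpa [translMap] using this
    rw [hs2] at hx0
    omega
  have hss : Aset α.1 ⊂ Aset β.1 := ⟨hsub, fun hb => hnotA (hb hinA)⟩
  rw [gr_eq_ncard, gr_eq_ncard]
  exact Set.ncard_lt_ncard hss (Aset_finite β.2)
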